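/- Let p, q, r, ν be real numbers with q ≠ 0, ν ≠ 0 and 4 ν² r + p < 0, and let ε ∈ {1, −1}. Set a = −ε ν √(−1/(4 ν² r + p)) and A = 12 ε (ν³/q) √(−1/(4 ν² r + p)). Then the function U(ξ) = A · sech²(ξ) satisfies (p a² + ν²) U′(ξ) − r q a U(ξ) U′(ξ) + r ν² a² U‴(ξ) = 0 for all ξ ∈ ℝ. -/

import Mathlib

/-!
`S = sech²` is the KdV soliton profile: it satisfies `S'' = 4 S - 6 S²`, hence
`S''' = (4 - 12 S) S'`. Substituting `U = A S` turns the equation into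
`A S' ((p + 4 r ν²) a² + ν² - r a (q A + 12 ν² a) S) = 0`,
and the chosen `a` and `A` make both coefficients vanish.
-/

open Real

theorem hasDerivAt_sech_sq (x : ℝ) :
    HasDerivAt (fun x => (1 / cosh x) ^ 2) (-2 * sinh x / cosh x ^ 3) x := by
  have hc : cosh x ≠ 0 := (cosh_pos x).ne'
  simp only [one_div]
  refine (((hasDerivAt_cosh x).fun_inv hc).fun_pow 2).congr_deriv ?_
  rw [Nat.cast_ofNat, pow_one]
  field_simp

theorem deriv_deriv_sech_sq :
    deriv (deriv fun x => (1 / cosh x) ^ 2)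
      = fun x => 4 * (1 / cosh x) ^ 2 - 6 * ((1 / cosh x) ^ 2) ^ 2 := by
  have hS' : deriv (fun x => (1 / cosh x) ^ 2) = fun x => -2 * sinh x / cosh x ^ 3 :=
    funext fun x => (hasDerivAt_sech_sq x).deriv
  funext x
  have hc : cosh x ≠ 0 := (cosh_pos x).ne'
  have h := ((hasDerivAt_sinh x).const_mul (-2)).fun_div ((hasDerivAt_cosh x).fun_pow 3)
    (pow_ne_zero 3 hc)
  rw [hS', h.deriv]
  have hch := cosh_sq x
  field_simp
  linear_combination (-6 * cosh x ^ 2) * hch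

theorem deriv_deriv_deriv_sech_sq (x : ℝ) :
    deriv (deriv (deriv fun x => (1 / cosh x) ^ 2)) x
      = (4 - 12 * (1 / cosh x) ^ 2) * deriv (fun x => (1 / cosh x) ^ 2) x := by
  have hS := hasDerivAt_sech_sq x
  rw [deriv_deriv_sech_sq, ((hS.const_mul 4).fun_sub ((hS.fun_pow 2).const_mul 6)).deriv, hS.deriv]
  ring

theorem travelling_wave_of_deriv_deriv_deriv {S : ℝ → ℝ} {p q r ν a A : ℝ}
    (hS : ∀ x, deriv (deriv (deriv S)) x = (4 - 12 * S x) * deriv S x)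
    (ha : (p + 4 * r * ν ^ 2) * a ^ 2 + ν ^ 2 = 0) (hA : q * A = -12 * ν ^ 2 * a) (x : ℝ) :
    (p * a ^ 2 + ν ^ 2) * deriv (fun x => A * S x) x
      - r * q * a * (A * S x) * deriv (fun x => A * S x) x
      + r * ν ^ 2 * a ^ 2 * deriv (deriv (deriv fun x => A * S x)) x = 0 := by
  simp only [deriv_const_mul_field', hS]
  linear_combination (A * deriv S x) * ha - (r * a * A * S x * deriv S x) * hA

theorem srlw_sech_explicit_solution_general
    (p q r ν ε : ℝ) (hq : q ≠ 0)
    (hpr : 4 * ν ^ 2 * r + p < 0) (hε : ε = 1 ∨ ε = -1)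
    (a A : ℝ)
    (ha : a = -ε * ν * Real.sqrt (-1 / (4 * ν ^ 2 * r + p)))
    (hA : A = 12 * ε * (ν ^ 3 / q) * Real.sqrt (-1 / (4 * ν ^ 2 * r + p))) :
    ∀ ξ : ℝ,
      (p * a ^ 2 + ν ^ 2) * deriv (fun ξ : ℝ => A * (1 / Real.cosh ξ) ^ 2) ξ
      - r * q * a * (A * (1 / Real.cosh ξ) ^ 2)
          * deriv (fun ξ : ℝ => A * (1 / Real.cosh ξ) ^ 2) ξ
      + r * ν ^ 2 * a ^ 2
          * deriv (deriv (deriv (fun ξ : ℝ => A * (1 / Real.cosh ξ) ^ 2))) ξ = 0 := by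
  have hsqrt : √(-1 / (4 * ν ^ 2 * r + p)) ^ 2 = -1 / (4 * ν ^ 2 * r + p) :=
    sq_sqrt (div_pos_of_neg_of_neg neg_one_lt_zero hpr).le
  have hε2 : ε ^ 2 = 1 := by rcases hε with rfl | rfl <;> norm_num
  have hdisp : (p + 4 * r * ν ^ 2) * a ^ 2 + ν ^ 2 = 0 := by
    rw [ha, mul_pow, mul_pow, neg_pow_two, hε2, hsqrt]
    linear_combination (-ν ^ 2) * mul_inv_cancel₀ hpr.ne
  have hamp : q * A = -12 * ν ^ 2 * a := by
    rw [ha, hA]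
    field_simp
  exact travelling_wave_of_deriv_deriv_deriv deriv_deriv_deriv_sech_sq hdisp hamp

/-- The sech²-type traveling wave solutions of the once-integrated sRLW equation
`(p a² + ν²) U' - r q a U U' + r ν² a² U''' = 0` with explicit parameters. -/
theorem srlw_sech_explicit_solution
    (p q r ν ε : ℝ) (hq : q ≠ 0) (hν : ν ≠ 0)
    (hpr : 4 * ν ^ 2 * r + p < 0) (hε : ε = 1 ∨ ε = -1)
    (a A : ℝ)
    (ha : a = -ε * ν * Real.sqrt (-1 / (4 * ν ^ 2 * r + p)))
    (hA : A = 12 * ε * (ν ^ 3 / q) * Real.sqrt (-1 / (4 * ν ^ 2 * r + p))) :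
    ∀ ξ : ℝ,
      (p * a ^ 2 + ν ^ 2) * deriv (fun ξ : ℝ => A * (1 / Real.cosh ξ) ^ 2) ξ
      - r * q * a * (A * (1 / Real.cosh ξ) ^ 2)
          * deriv (fun ξ : ℝ => A * (1 / Real.cosh ξ) ^ 2) ξ
      + r * ν ^ 2 * a ^ 2
          * deriv (deriv (deriv (fun ξ : ℝ => A * (1 / Real.cosh ξ) ^ 2))) ξ = 0 :=
  srlw_sech_explicit_solution_general p q r ν ε hq hpr hε a A ha hA
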